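/- arXiv:2409.11443 — 4 statements merged into one kernel-verified Lean document; each statement's English description precedes it below -/
import Mathlib

section
/- With $V = \mathrm{diag}(\bm\gamma) - d_I\mathcal{L}$ and $F_N = \mathrm{diag}(N\bm\alpha\circ\bm\beta/(\bm\zeta + N\bm\alpha))$ for $N>0$, the basic reproduction number $\mathcal{R}_0(N) = \rho(F_N V^{-1})$ is strictly increasing in $N>0$, satisfies $\lim_{N\to 0^+}\mathcal{R}_0(N) = 0$, and $\lim_{N\to\infty}\mathcal{R}_0(N) = \rho(\mathrm{diag}(\bm\beta) V^{-1})$. -/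
open Matrix Filter

/-- A square matrix is quasipositive if all its off-diagonal entries are nonnegative. -/
def Quasipositive {n : ℕ} (L : Matrix (Fin n) (Fin n) ℝ) : Prop :=
  ∀ i j, i ≠ j → 0 ≤ L i j

/-- Irreducibility in the standard sense of matrix theory. -/
def MatIrreducible {n : ℕ} (L : Matrix (Fin n) (Fin n) ℝ) : Prop :=
  ∀ S : Set (Fin n), S.Nonempty → S ≠ Set.univ → ∃ i ∉ S, ∃ j ∈ S, L i j ≠ 0

/-- The spectral radius: the maximum modulus of the (complex) eigenvalues. -/
noncomputable def specRad {n : ℕ} (M : Matrix (Fin n) (Fin n) ℝ) : ℝ :=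
  sSup ((fun z : ℂ => ‖z‖) '' spectrum ℂ (M.map (algebraMap ℝ ℂ)))

/-!
Write `W = V⁻¹`. The transpose of `V` is a Z-matrix with row sums `γ > 0`, so `Vᵀ = s (1 - C)` with
`C ≥ 0`, `‖C‖_∞ < 1`, and the Neumann series `∑ Cᵏ` shows that `W` is entrywise nonnegative with
positive diagonal. On nonnegative matrices the spectral radius is monotone (Gelfand's formula, the
`∞`-operator norms of the powers being monotone) and positively homogeneous. The diagonal entries
`N αᵢ βᵢ / (ζᵢ + N αᵢ)` of `F_N` are strictly increasing in `N`, at most `N αᵢ βᵢ / ζᵢ`, and tend to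
`βᵢ`. So for `N₁ < N₂` we get `F_{N₁} W ≤ c F_{N₂} W` with `c < 1`, near `0` we get
`F_N W ≤ N · diag(α ∘ β / ζ) W`, and near `∞` `F_N W` is squeezed between `m(N) diag(β) W` and
`M(N) diag(β) W` with `m(N), M(N) → 1`.
-/

open scoped ENNReal Topology

attribute [local instance] Matrix.linftyOpNormedRing Matrix.linftyOpNormedAlgebra

namespace Matrix

variable {ι R : Type*} [Fintype ι] [DecidableEq ι]

lemma pow_apply_le_pow_apply [Semiring R] [PartialOrder R] [IsOrderedRing R]
    {A B : Matrix ι ι R} (hA : ∀ i j, 0 ≤ A i j) (hAB : ∀ i j, A i j ≤ B i j) (k : ℕ) (i j : ι) :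
    (A ^ k) i j ≤ (B ^ k) i j := by
  induction k generalizing j with
  | zero => rfl
  | succ k ih =>
    rw [pow_succ, pow_succ, mul_apply, mul_apply]
    exact Finset.sum_le_sum fun l _ => mul_le_mul (ih l) (hAB l j) (hA l j)
      (pow_apply_nonneg (fun i j => (hA i j).trans (hAB i j)) k i l)

lemma linfty_opNNNorm_map_eq {α β : Type*} [NormedRing α] [NormedRing β]
    (A : Matrix ι ι α) (f : α → β) (hf : ∀ a, ‖f a‖₊ = ‖a‖₊) : ‖A.map f‖₊ = ‖A‖₊ := by
  simp only [linfty_opNNNorm_def, map_apply, hf]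

lemma linfty_opNNNorm_le_of_le {A B : Matrix ι ι ℝ} (hA : ∀ i j, 0 ≤ A i j)
    (hAB : ∀ i j, A i j ≤ B i j) : ‖A‖₊ ≤ ‖B‖₊ := by
  rw [linfty_opNNNorm_def, linfty_opNNNorm_def]
  refine Finset.sup_mono_fun fun i _ => Finset.sum_le_sum fun j _ => ?_
  rw [← NNReal.coe_le_coe, coe_nnnorm, coe_nnnorm, Real.norm_of_nonneg (hA i j),
    Real.norm_of_nonneg ((hA i j).trans (hAB i j))]
  exact hAB i j

lemma linfty_opNorm_lt_one_of_rowSum_lt_one {C : Matrix ι ι ℝ} (hC : ∀ i j, 0 ≤ C i j)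
    (hrow : ∀ i, ∑ j, C i j < 1) : ‖C‖ < 1 := by
  rw [linfty_opNorm_def, ← NNReal.coe_one, NNReal.coe_lt_coe, Finset.sup_lt_iff zero_lt_one]
  intro i _
  rw [← NNReal.coe_lt_coe, NNReal.coe_sum]
  simpa only [coe_nnnorm, Real.norm_of_nonneg (hC i _), NNReal.coe_one] using hrow i

lemma hasSum_pow_inv_one_sub {C : Matrix ι ι ℝ} (hC : ‖C‖ < 1) :
    HasSum (fun k => C ^ k) (1 - C)⁻¹ := by
  rw [nonsing_inv_eq_ringInverse]
  exact hasSum_geom_series_inverse C hC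

lemma inv_one_sub_apply_nonneg {C : Matrix ι ι ℝ} (hC : ∀ i j, 0 ≤ C i j) (hC1 : ‖C‖ < 1)
    (i j : ι) : 0 ≤ (1 - C)⁻¹ i j :=
  hasSum_le (fun k => pow_apply_nonneg hC k i j) hasSum_zero
    (Pi.hasSum.mp (Pi.hasSum.mp (hasSum_pow_inv_one_sub hC1) i) j)

lemma one_le_inv_one_sub_apply_self {C : Matrix ι ι ℝ} (hC : ∀ i j, 0 ≤ C i j) (hC1 : ‖C‖ < 1)
    (i : ι) : 1 ≤ (1 - C)⁻¹ i i := by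
  simpa using le_hasSum (Pi.hasSum.mp (Pi.hasSum.mp (hasSum_pow_inv_one_sub hC1) i) i) 0
    fun k _ => pow_apply_nonneg hC k i i

lemma exists_eq_smul_one_sub_of_rowSum_pos {M : Matrix ι ι ℝ}
    (hoff : ∀ i j, i ≠ j → M i j ≤ 0) (hrow : ∀ i, 0 < ∑ j, M i j) :
    ∃ s : ℝ, 0 < s ∧ ∃ C : Matrix ι ι ℝ, (∀ i j, 0 ≤ C i j) ∧ ‖C‖ < 1 ∧ M = s • (1 - C) := by
  set s := 1 + ∑ i, |M i i|
  have hdiag : ∀ i, M i i < s := fun i =>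
    ((le_abs_self _).trans (Finset.single_le_sum (fun j _ => abs_nonneg (M j j))
      (Finset.mem_univ i))).trans_lt (lt_one_add _)
  have hs : 0 < s := by positivity
  set C := 1 - s⁻¹ • M
  have hC : ∀ i j, 0 ≤ C i j := by
    intro i j
    rcases eq_or_ne i j with rfl | hij
    · simp only [C, sub_apply, one_apply_eq, smul_apply, smul_eq_mul, sub_nonneg]
      exact (inv_mul_le_one₀ hs).mpr (hdiag i).le
    · simp only [C, sub_apply, one_apply_ne hij, smul_apply, smul_eq_mul, zero_sub, neg_nonneg]
      exact mul_nonpos_of_nonneg_of_nonpos (inv_nonneg.mpr hs.le) (hoff i j hij)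
  refine ⟨s, hs, C, hC, linfty_opNorm_lt_one_of_rowSum_lt_one hC fun i => ?_, ?_⟩
  · simp only [C, sub_apply, smul_apply, smul_eq_mul, Finset.sum_sub_distrib, ← Finset.mul_sum,
      one_apply, Finset.sum_ite_eq, Finset.mem_univ, if_true]
    linarith [mul_pos (inv_pos.mpr hs) (hrow i)]
  · rw [sub_sub_cancel, smul_smul, mul_inv_cancel₀ hs.ne', one_smul]

lemma inv_nonneg_and_diag_pos_of_rowSum_pos {M : Matrix ι ι ℝ}
    (hoff : ∀ i j, i ≠ j → M i j ≤ 0) (hrow : ∀ i, 0 < ∑ j, M i j) :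
    (∀ i j, 0 ≤ M⁻¹ i j) ∧ ∀ i, 0 < M⁻¹ i i := by
  obtain ⟨s, hs, C, hC, hC1, rfl⟩ := exists_eq_smul_one_sub_of_rowSum_pos hoff hrow
  have hdet : IsUnit (1 - C).det :=
    (isUnit_iff_isUnit_det _).mp (isUnit_one_sub_of_norm_lt_one hC1)
  have hinv : (s • (1 - C))⁻¹ = s⁻¹ • (1 - C)⁻¹ :=
    inv_eq_left_inv (by simp [smul_smul, hs.ne', nonsing_inv_mul _ hdet])
  simp only [hinv, smul_apply, smul_eq_mul]
  exact ⟨fun i j => mul_nonneg (inv_nonneg.mpr hs.le) (inv_one_sub_apply_nonneg hC hC1 i j),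
    fun i => mul_pos (inv_pos.mpr hs)
      (zero_lt_one.trans_le (one_le_inv_one_sub_apply_self hC hC1 i))⟩

lemma spectralRadius_map_le_of_le {A B : Matrix ι ι ℝ} (hA : ∀ i j, 0 ≤ A i j)
    (hAB : ∀ i j, A i j ≤ B i j) :
    spectralRadius ℂ (A.map (algebraMap ℝ ℂ)) ≤ spectralRadius ℂ (B.map (algebraMap ℝ ℂ)) := by
  have gelfand (M : Matrix ι ι ℝ) :
      Tendsto (fun k : ℕ => (‖M ^ k‖₊ : ℝ≥0∞) ^ (1 / k : ℝ)) atTop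
        (𝓝 (spectralRadius ℂ (M.map (algebraMap ℝ ℂ)))) := by
    convert spectrum.pow_nnnorm_pow_one_div_tendsto_nhds_spectralRadius
      (M.map (algebraMap ℝ ℂ)) using 4 with k
    rw [← RingHom.mapMatrix_apply, ← map_pow, RingHom.mapMatrix_apply,
      linfty_opNNNorm_map_eq _ _ fun x => by simp]
  refine le_of_tendsto_of_tendsto' (gelfand A) (gelfand B) fun k => ?_
  gcongr
  exact linfty_opNNNorm_le_of_le (pow_apply_nonneg hA k) (pow_apply_le_pow_apply hA hAB k)

end Matrix

namespace spectrum

lemma spectralRadius_smul {𝕜 A : Type*} [NormedField 𝕜] [Ring A] [Algebra 𝕜 A] (k : 𝕜) (a : A) :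
    spectralRadius 𝕜 (k • a) = ‖k‖₊ * spectralRadius 𝕜 a := by
  rcases eq_or_ne k 0 with rfl | hk
  · simp [spectralRadius_zero]
  · have hσ := spectrum.unit_smul_eq_smul a (Units.mk0 k hk)
    simp only [Units.smul_mk0] at hσ
    simp only [spectralRadius, hσ, ← Set.image_smul, iSup_image, nnnorm_smul, ENNReal.coe_mul,
      ENNReal.mul_iSup]

section ComplexBanachAlgebra

variable {A : Type*} [NormedRing A] [NormedAlgebra ℂ A] [CompleteSpace A]

lemma spectralRadius_ne_top [NormOneClass A] (a : A) : spectralRadius ℂ a ≠ ⊤ :=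
  ((spectralRadius_le_nnnorm a).trans_lt ENNReal.coe_lt_top).ne

lemma toReal_spectralRadius_eq_sSup [Nontrivial A] (a : A) :
    (spectralRadius ℂ a).toReal = sSup ((‖·‖) '' spectrum ℂ a) := by
  obtain ⟨z, hz, hz_eq⟩ := exists_nnnorm_eq_spectralRadius a
  have hmax : IsGreatest ((‖·‖) '' spectrum ℂ a) ‖z‖ := by
    refine ⟨⟨z, hz, rfl⟩, ?_⟩
    rintro _ ⟨w, hw, rfl⟩
    have : (‖w‖₊ : ℝ≥0∞) ≤ ‖z‖₊ :=
      hz_eq ▸ le_iSup₂ (f := fun k (_ : k ∈ spectrum ℂ a) => (‖k‖₊ : ℝ≥0∞)) w hw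
    exact_mod_cast this
  rw [hmax.csSup_eq, ← hz_eq]
  rfl

end ComplexBanachAlgebra

end spectrum

section SpecRad

variable {n : ℕ} [NeZero n]

lemma specRad_eq_toReal (M : Matrix (Fin n) (Fin n) ℝ) :
    specRad M = (spectralRadius ℂ (M.map (algebraMap ℝ ℂ))).toReal :=
  (spectrum.toReal_spectralRadius_eq_sSup _).symm

lemma specRad_nonneg (M : Matrix (Fin n) (Fin n) ℝ) : 0 ≤ specRad M := by
  rw [specRad_eq_toReal]
  exact ENNReal.toReal_nonneg

lemma specRad_one : specRad (1 : Matrix (Fin n) (Fin n) ℝ) = 1 := by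
  rw [specRad_eq_toReal, Matrix.map_one _ (map_zero _) (map_one _), spectrum.spectralRadius_one,
    ENNReal.toReal_one]

lemma specRad_smul (M : Matrix (Fin n) (Fin n) ℝ) {c : ℝ} (hc : 0 ≤ c) :
    specRad (c • M) = c * specRad M := by
  rw [specRad_eq_toReal, specRad_eq_toReal, Matrix.map_smul' _ _ _ (map_mul _),
    spectrum.spectralRadius_smul, ENNReal.toReal_mul]
  simp [hc]

lemma specRad_mono {A B : Matrix (Fin n) (Fin n) ℝ} (hA : ∀ i j, 0 ≤ A i j)
    (hAB : ∀ i j, A i j ≤ B i j) : specRad A ≤ specRad B := by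
  rw [specRad_eq_toReal, specRad_eq_toReal]
  exact ENNReal.toReal_mono (spectrum.spectralRadius_ne_top _)
    (Matrix.spectralRadius_map_le_of_le hA hAB)

lemma specRad_pos {A : Matrix (Fin n) (Fin n) ℝ} (hA : ∀ i j, 0 ≤ A i j) (hdiag : ∀ i, 0 < A i i) :
    0 < specRad A := by
  set δ := Finset.univ.inf' Finset.univ_nonempty fun i => A i i
  have hδ : 0 < δ := (Finset.lt_inf'_iff _).mpr fun i _ => hdiag i
  have hδ1 : ∀ i j, 0 ≤ (δ • (1 : Matrix (Fin n) (Fin n) ℝ)) i j := fun i j => by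
    rcases eq_or_ne i j with rfl | hij
    · simpa using hδ.le
    · simp [Matrix.one_apply_ne hij]
  have hδA : ∀ i j, (δ • (1 : Matrix (Fin n) (Fin n) ℝ)) i j ≤ A i j := fun i j => by
    rcases eq_or_ne i j with rfl | hij
    · simpa using Finset.inf'_le (fun i => A i i) (Finset.mem_univ i)
    · simpa [Matrix.one_apply_ne hij] using hA i j
  calc 0 < δ := hδ
    _ = specRad (δ • (1 : Matrix (Fin n) (Fin n) ℝ)) := by
      rw [specRad_smul _ hδ.le, specRad_one, mul_one]
    _ ≤ specRad A := specRad_mono hδ1 hδA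

end SpecRad

section DiagonalScaling

variable {n : ℕ} [NeZero n] {W : Matrix (Fin n) (Fin n) ℝ}

lemma specRad_diagonal_mul_mono (hW : ∀ i j, 0 ≤ W i j) {u v : Fin n → ℝ} (hu : 0 ≤ u)
    (huv : u ≤ v) : specRad (diagonal u * W) ≤ specRad (diagonal v * W) :=
  specRad_mono (fun i j => by rw [diagonal_mul]; exact mul_nonneg (hu i) (hW i j))
    fun i j => by simp only [diagonal_mul]; exact mul_le_mul_of_nonneg_right (huv i) (hW i j)

lemma specRad_diagonal_smul_mul (W : Matrix (Fin n) (Fin n) ℝ) (v : Fin n → ℝ) {c : ℝ}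
    (hc : 0 ≤ c) : specRad (diagonal (c • v) * W) = c * specRad (diagonal v * W) := by
  rw [diagonal_smul, smul_mul_assoc, specRad_smul _ hc]

lemma specRad_diagonal_mul_lt (hW : ∀ i j, 0 ≤ W i j) (hWd : ∀ i, 0 < W i i) {u v : Fin n → ℝ}
    (hu : 0 ≤ u) (huv : ∀ i, u i < v i) : specRad (diagonal u * W) < specRad (diagonal v * W) := by
  have hv i : 0 < v i := (hu i).trans_lt (huv i)
  set c := Finset.univ.sup' Finset.univ_nonempty fun i => u i / v i
  have hc1 : c < 1 := (Finset.sup'_lt_iff _).mpr fun i _ => (div_lt_one (hv i)).mpr (huv i)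
  have hc0 : 0 ≤ c :=
    (div_nonneg (hu 0) (hv 0).le).trans (Finset.le_sup' (fun i => u i / v i) (Finset.mem_univ 0))
  have hpos : 0 < specRad (diagonal v * W) :=
    specRad_pos (fun i j => by rw [diagonal_mul]; exact mul_nonneg (hv i).le (hW i j))
      fun i => by rw [diagonal_mul]; exact mul_pos (hv i) (hWd i)
  calc specRad (diagonal u * W) ≤ specRad (diagonal (c • v) * W) :=
        specRad_diagonal_mul_mono hW hu fun i =>
          (div_le_iff₀ (hv i)).mp (Finset.le_sup' (fun i => u i / v i) (Finset.mem_univ i))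
    _ = c * specRad (diagonal v * W) := specRad_diagonal_smul_mul W v hc0
    _ < specRad (diagonal v * W) := mul_lt_of_lt_one_left hpos hc1

lemma tendsto_specRad_diagonal_mul {α : Type*} {l : Filter α} (hW : ∀ i j, 0 ≤ W i j)
    {u : α → Fin n → ℝ} {v : Fin n → ℝ} (hv : ∀ i, 0 < v i) (hu : ∀ᶠ a in l, 0 ≤ u a)
    (huv : Tendsto u l (𝓝 v)) :
    Tendsto (fun a => specRad (diagonal (u a) * W)) l (𝓝 (specRad (diagonal v * W))) := by
  have hratio : ∀ i ∈ Finset.univ, Tendsto (fun a => u a i / v i) l (𝓝 1) := fun i _ => by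
    simpa [div_self (hv i).ne'] using ((tendsto_pi_nhds.mp huv i).div_const (v i))
  set m := fun a => Finset.univ.inf' Finset.univ_nonempty fun i => u a i / v i
  set M := fun a => Finset.univ.sup' Finset.univ_nonempty fun i => u a i / v i
  have hm : Tendsto m l (𝓝 1) := by
    simpa using Filter.Tendsto.finset_inf'_nhds_apply Finset.univ_nonempty hratio
  have hM : Tendsto M l (𝓝 1) := by
    simpa using Filter.Tendsto.finset_sup'_nhds_apply Finset.univ_nonempty hratio
  refine tendsto_of_tendsto_of_tendsto_of_le_of_le' (by simpa using hm.mul_const _)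
    (by simpa using hM.mul_const _) ?_ ?_
  all_goals filter_upwards [hu] with a ha
  · have hm0 : 0 ≤ m a := Finset.le_inf' _ _ fun i _ => div_nonneg (ha i) (hv i).le
    rw [← specRad_diagonal_smul_mul W v hm0]
    exact specRad_diagonal_mul_mono hW (smul_nonneg hm0 fun i => (hv i).le) fun i =>
      (le_div_iff₀ (hv i)).mp (Finset.inf'_le (fun i => u a i / v i) (Finset.mem_univ i))
  · have hM0 : 0 ≤ M a := (div_nonneg (ha 0) (hv 0).le).trans
      (Finset.le_sup' (fun i => u a i / v i) (Finset.mem_univ 0))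
    rw [← specRad_diagonal_smul_mul W v hM0]
    exact specRad_diagonal_mul_mono hW ha fun i =>
      (div_le_iff₀ (hv i)).mp (Finset.le_sup' (fun i => u a i / v i) (Finset.mem_univ i))

end DiagonalScaling

noncomputable def saturatedRate (a b z N : ℝ) : ℝ := N * a * b / (z + N * a)

section SaturatedRate

variable {a b z : ℝ}

lemma saturatedRate_pos (ha : 0 < a) (hb : 0 < b) (hz : 0 < z) {N : ℝ} (hN : 0 < N) :
    0 < saturatedRate a b z N := by
  unfold saturatedRate; positivity

lemma saturatedRate_strictMonoOn (ha : 0 < a) (hb : 0 < b) (hz : 0 < z) :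
    StrictMonoOn (saturatedRate a b z) (Set.Ioi 0) := by
  intro N₁ (h₁ : 0 < N₁) N₂ (h₂ : 0 < N₂) h
  unfold saturatedRate
  rw [div_lt_div_iff₀ (by positivity) (by positivity)]
  nlinarith [mul_lt_mul_of_pos_right h (mul_pos (mul_pos ha hb) hz)]

lemma saturatedRate_le_mul (ha : 0 ≤ a) (hb : 0 ≤ b) (hz : 0 < z) {N : ℝ} (hN : 0 ≤ N) :
    saturatedRate a b z N ≤ N * (a * b / z) := by
  rw [saturatedRate, ← mul_div_assoc, ← mul_assoc]
  exact div_le_div_of_nonneg_left (by positivity) hz (by nlinarith [mul_nonneg hN ha])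

lemma tendsto_saturatedRate_atTop (ha : a ≠ 0) :
    Tendsto (saturatedRate a b z) atTop (𝓝 b) := by
  have hden : Tendsto (fun N : ℝ => z * N⁻¹ + a) atTop (𝓝 a) := by
    simpa using (tendsto_inv_atTop_zero.const_mul z).add_const a
  have hlim : Tendsto (fun N : ℝ => a * b / (z * N⁻¹ + a)) atTop (𝓝 (a * b / a)) :=
    tendsto_const_nhds.div hden ha
  rw [mul_div_cancel_left₀ b ha] at hlim
  refine hlim.congr' ((eventually_gt_atTop 0).mono fun N (hN : 0 < N) => ?_)
  rw [saturatedRate]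
  field_simp

end SaturatedRate

lemma inv_diagonal_sub_smul_nonneg_and_diag_pos {n : ℕ} {L : Matrix (Fin n) (Fin n) ℝ}
    (hq : Quasipositive L) (hcol : ∀ j, ∑ i, L i j = 0) {γ : Fin n → ℝ} (hγ : ∀ j, 0 < γ j)
    {d : ℝ} (hd : 0 ≤ d) :
    (∀ i j, 0 ≤ (diagonal γ - d • L)⁻¹ i j) ∧ ∀ i, 0 < (diagonal γ - d • L)⁻¹ i i := by
  set V := diagonal γ - d • L
  have hoff : ∀ i j, i ≠ j → Vᵀ i j ≤ 0 := fun i j hij => by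
    simp only [V, transpose_apply, Matrix.sub_apply, diagonal_apply_ne _ hij.symm,
      Matrix.smul_apply, smul_eq_mul, zero_sub, neg_nonpos]
    exact mul_nonneg hd (hq j i hij.symm)
  have hrow : ∀ i, 0 < ∑ j, Vᵀ i j := fun i => by
    simpa [V, diagonal_apply, Finset.sum_sub_distrib, ← Finset.mul_sum, hcol] using hγ i
  obtain ⟨hV0, hVd⟩ := inv_nonneg_and_diag_pos_of_rowSum_pos hoff hrow
  rw [← transpose_nonsing_inv] at hV0 hVd
  exact ⟨fun i j => hV0 j i, hVd⟩

theorem stmt2_general {n : ℕ} (hn : 0 < n) (L : Matrix (Fin n) (Fin n) ℝ)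
    (hq : Quasipositive L)
    (hcol : ∀ j, ∑ i, L i j = 0)
    (α β γ ζ : Fin n → ℝ) (dI : ℝ) (hdI : 0 < dI)
    (hα : ∀ j, 0 < α j)
    (hβ : ∀ j, 0 < β j) (hγ : ∀ j, 0 < γ j) (hζ : ∀ j, 0 < ζ j) :
    let V := Matrix.diagonal γ - dI • L
    let R0 : ℝ → ℝ := fun N =>
      specRad (Matrix.diagonal (fun i => N * α i * β i / (ζ i + N * α i)) * V⁻¹)
    StrictMonoOn R0 (Set.Ioi 0) ∧
      Tendsto R0 (nhdsWithin 0 (Set.Ioi 0)) (nhds 0) ∧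
      Tendsto R0 atTop (nhds (specRad (Matrix.diagonal β * V⁻¹))) := by
  intro V R0
  have : NeZero n := ⟨hn.ne'⟩
  obtain ⟨hW, hWd⟩ := inv_diagonal_sub_smul_nonneg_and_diag_pos hq hcol hγ hdI.le
  have hrate_nonneg {N : ℝ} (hN : 0 < N) : 0 ≤ fun i => saturatedRate (α i) (β i) (ζ i) N :=
    fun i => (saturatedRate_pos (hα i) (hβ i) (hζ i) hN).le
  have hR0_le (N : ℝ) (hN : 0 < N) :
      R0 N ≤ N * specRad (diagonal (fun i => α i * β i / ζ i) * V⁻¹) := by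
    rw [← specRad_diagonal_smul_mul _ _ hN.le]
    exact specRad_diagonal_mul_mono hW (hrate_nonneg hN) fun i =>
      saturatedRate_le_mul (hα i).le (hβ i).le (hζ i) hN.le
  refine ⟨fun N₁ h₁ N₂ h₂ h => ?_, ?_, ?_⟩
  · exact specRad_diagonal_mul_lt hW hWd (hrate_nonneg h₁) fun i =>
      saturatedRate_strictMonoOn (hα i) (hβ i) (hζ i) h₁ h₂ h
  · refine squeeze_zero' (Eventually.of_forall fun N => specRad_nonneg _)
      (eventually_nhdsWithin_of_forall hR0_le) ?_
    exact tendsto_nhdsWithin_of_tendsto_nhds ((continuous_mul_const _).tendsto' 0 0 (zero_mul _))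
  · exact tendsto_specRad_diagonal_mul hW hβ ((eventually_gt_atTop 0).mono fun _ => hrate_nonneg)
      (tendsto_pi_nhds.mpr fun i => tendsto_saturatedRate_atTop (hα i).ne')

theorem stmt2 {n : ℕ} (hn : 0 < n) (L : Matrix (Fin n) (Fin n) ℝ)
    (hq : Quasipositive L) (hirr : MatIrreducible L)
    (hcol : ∀ j, ∑ i, L i j = 0)
    (α β γ ζ : Fin n → ℝ) (dI : ℝ) (hdI : 0 < dI)
    (hα : ∀ j, 0 < α j) (hαnull : L.mulVec α = 0) (hαsum : ∑ j, α j = 1)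
    (hβ : ∀ j, 0 < β j) (hγ : ∀ j, 0 < γ j) (hζ : ∀ j, 0 < ζ j) :
    let V := Matrix.diagonal γ - dI • L
    let R0 : ℝ → ℝ := fun N =>
      specRad (Matrix.diagonal (fun i => N * α i * β i / (ζ i + N * α i)) * V⁻¹)
    StrictMonoOn R0 (Set.Ioi 0) ∧
      Tendsto R0 (nhdsWithin 0 (Set.Ioi 0)) (nhds 0) ∧
      Tendsto R0 atTop (nhds (specRad (Matrix.diagonal β * V⁻¹))) :=
  stmt2_general hn L hq hcol α β γ ζ dI hdI hα hβ hγ hζ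
end

section
/- If $\bm\alpha\circ\bm\beta/(\bm\zeta+N\bm\alpha) = m\bm\gamma$ for some $m>0$, then $\mathcal{R}_0 = \rho(\mathrm{diag}(N\bm\alpha\circ\bm\beta/(\bm\zeta+N\bm\alpha))(\mathrm{diag}(\bm\gamma)-d_I\mathcal{L})^{-1}) = mN$ for every $d_I > 0$. -/
open Matrix

/-!
With `A = diag γ - d_I L` and `D = diag(Nα∘β/(ζ+Nα)) = mN diag γ`, a complex `z` is an eigenvalue
of `D A⁻¹` iff `z A - mN diag γ` is singular. For `z = mN` this matrix is `-mN d_I L`, singular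
because `L` has zero column sums. For `|z| > mN` it is strictly diagonally dominant by columns,
since `L` is quasipositive with zero column sums, hence nonsingular; the same dominance
makes `A` itself invertible.
-/

lemma mem_spectrum_map_mul_inv_iff {ι : Type*} [Fintype ι] [DecidableEq ι]
    {A D : Matrix ι ι ℝ} (hA : A.det ≠ 0) (z : ℂ) :
    z ∈ spectrum ℂ ((D * A⁻¹).map (algebraMap ℝ ℂ)) ↔
      (z • A.map (algebraMap ℝ ℂ) - D.map (algebraMap ℝ ℂ)).det = 0 := by
  set f := algebraMap ℝ ℂ
  have hfactor : (z • 1 - (D * A⁻¹).map f) * A.map f = z • A.map f - D.map f := by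
    rw [sub_mul, smul_one_mul, ← Matrix.map_mul, Matrix.mul_assoc,
      nonsing_inv_mul A (isUnit_iff_ne_zero.mpr hA), Matrix.mul_one]
  have hAf : (A.map f).det ≠ 0 := by
    rw [← RingHom.mapMatrix_apply, ← RingHom.map_det]
    exact (map_ne_zero f).mpr hA
  rw [spectrum.mem_iff, isUnit_iff_isUnit_det, isUnit_iff_ne_zero, not_not,
    Algebra.algebraMap_eq_smul_one, ← hfactor, det_mul, mul_eq_zero, or_iff_left hAf]

section ZeroColumnSums

variable {n : ℕ} {L : Matrix (Fin n) (Fin n) ℝ}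

lemma sum_erase_eq_neg_diag_of_sum_col_eq_zero (hcol : ∀ j, ∑ i, L i j = 0) (k : Fin n) :
    ∑ i ∈ Finset.univ.erase k, L i k = -L k k := by
  linarith [Finset.add_sum_erase Finset.univ (L · k) (Finset.mem_univ k), hcol k]

lemma det_eq_zero_of_sum_col_eq_zero (hn : 0 < n) (hcol : ∀ j, ∑ i, L i j = 0) : L.det = 0 := by
  refine exists_vecMul_eq_zero_iff.mp ⟨fun _ => 1, fun h => ?_, ?_⟩
  · simpa using congrFun h ⟨0, hn⟩
  · ext j
    simpa [vecMul, dotProduct] using hcol j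

lemma det_smul_sub_smul_diagonal_eq_zero (hn : 0 < n) (hcol : ∀ j, ∑ i, L i j = 0)
    (γ : Fin n → ℝ) (t : ℝ) (c : ℂ) :
    (c • (diagonal γ - t • L).map (algebraMap ℝ ℂ) - c • (diagonal γ).map (algebraMap ℝ ℂ)).det
      = 0 := by
  rw [← smul_sub, ← RingHom.mapMatrix_apply, ← RingHom.mapMatrix_apply, ← map_sub,
    sub_sub_cancel_left, det_smul, RingHom.mapMatrix_apply, ← RingHom.mapMatrix_apply,
    ← RingHom.map_det, det_neg, det_smul, det_eq_zero_of_sum_col_eq_zero hn hcol]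
  simp

lemma det_smul_sub_smul_diagonal_ne_zero (hq : Quasipositive L) (hcol : ∀ j, ∑ i, L i j = 0)
    {γ : Fin n → ℝ} (hγ : ∀ j, 0 < γ j) {t : ℝ} (ht : 0 ≤ t) {z c : ℂ} (hzc : ‖c‖ < ‖z‖) :
    (z • (diagonal γ - t • L).map (algebraMap ℝ ℂ) - c • (diagonal γ).map (algebraMap ℝ ℂ)).det
      ≠ 0 := by
  refine det_ne_zero_of_sum_col_lt_diag fun k => ?_
  have hoff : ∀ i ∈ Finset.univ.erase k,
      ‖(z • (diagonal γ - t • L).map (algebraMap ℝ ℂ)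
        - c • (diagonal γ).map (algebraMap ℝ ℂ)) i k‖ = ‖z‖ * (t * L i k) := by
    intro i hi
    have hik := Finset.ne_of_mem_erase hi
    simp [diagonal_apply_ne _ hik, abs_of_nonneg (hq i k hik), abs_of_nonneg ht]
  have hdiag : ‖(z • (diagonal γ - t • L).map (algebraMap ℝ ℂ)
      - c • (diagonal γ).map (algebraMap ℝ ℂ)) k k‖
        = ‖z * ((γ k - t * L k k : ℝ) : ℂ) - c * (γ k : ℂ)‖ := by
    simp
  have hLkk : L k k ≤ 0 := by
    have : 0 ≤ ∑ i ∈ Finset.univ.erase k, L i k :=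
      Finset.sum_nonneg fun i hi => hq i k (Finset.ne_of_mem_erase hi)
    linarith [sum_erase_eq_neg_diag_of_sum_col_eq_zero hcol k]
  have hnorm_diag : ‖z * ((γ k - t * L k k : ℝ) : ℂ)‖ = ‖z‖ * (γ k - t * L k k) := by
    rw [norm_mul, Complex.norm_real, Real.norm_of_nonneg (by nlinarith [hγ k])]
  have hnorm_c : ‖c * (γ k : ℂ)‖ = ‖c‖ * γ k := by
    rw [norm_mul, Complex.norm_real, Real.norm_of_nonneg (hγ k).le]
  calc ∑ i ∈ Finset.univ.erase k, _ = ‖z‖ * (t * -L k k) := by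
        rw [Finset.sum_congr rfl hoff, ← Finset.mul_sum, ← Finset.mul_sum,
          sum_erase_eq_neg_diag_of_sum_col_eq_zero hcol k]
    _ < ‖z‖ * (γ k - t * L k k) - ‖c‖ * γ k := by nlinarith [hγ k]
    _ = ‖z * ((γ k - t * L k k : ℝ) : ℂ)‖ - ‖c * (γ k : ℂ)‖ := by rw [hnorm_diag, hnorm_c]
    _ ≤ _ := (norm_sub_norm_le _ _).trans_eq hdiag.symm

end ZeroColumnSums

theorem stmt4_general {n : ℕ} (hn : 0 < n) (L : Matrix (Fin n) (Fin n) ℝ)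
    (hq : Quasipositive L)
    (hcol : ∀ j, ∑ i, L i j = 0)
    (α β γ ζ : Fin n → ℝ) (N m : ℝ) (hN : 0 < N) (hm : 0 < m)
    (hγ : ∀ j, 0 < γ j)
    (hprop : ∀ i, α i * β i / (ζ i + N * α i) = m * γ i) :
    ∀ dI : ℝ, 0 < dI →
      specRad (Matrix.diagonal (fun i => N * α i * β i / (ζ i + N * α i)) *
        (Matrix.diagonal γ - dI • L)⁻¹) = m * N := by
  intro dI hdI
  have hD : diagonal (fun i => N * α i * β i / (ζ i + N * α i)) = (m * N) • diagonal γ := by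
    rw [← diagonal_smul]
    congr 1
    funext i
    rw [Pi.smul_apply, smul_eq_mul, mul_assoc, mul_div_assoc, hprop i]
    ring
  have hDc : ((m * N) • diagonal γ).map (algebraMap ℝ ℂ)
      = ((m * N : ℝ) : ℂ) • (diagonal γ).map (algebraMap ℝ ℂ) := by
    ext i j
    by_cases h : i = j <;> simp [h]
  have hA : (diagonal γ - dI • L).det ≠ 0 := by
    have := det_smul_sub_smul_diagonal_ne_zero hq hcol hγ hdI.le (z := 1) (c := 0) (by simp)
    rwa [one_smul, zero_smul, sub_zero, ← RingHom.mapMatrix_apply, ← RingHom.map_det,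
      map_ne_zero] at this
  have hspec := mem_spectrum_map_mul_inv_iff (D := (m * N) • diagonal γ) hA
  rw [hDc] at hspec
  rw [specRad, hD]
  refine IsGreatest.csSup_eq ⟨⟨_, (hspec _).2 (det_smul_sub_smul_diagonal_eq_zero hn hcol _ _ _),
    by simp [abs_of_pos hm, abs_of_pos hN]⟩, ?_⟩
  rintro _ ⟨z, hz, rfl⟩
  by_contra! hlt
  refine det_smul_sub_smul_diagonal_ne_zero hq hcol hγ hdI.le ?_ ((hspec z).1 hz)
  rwa [Complex.norm_real, Real.norm_of_nonneg (mul_pos hm hN).le]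

theorem stmt4 {n : ℕ} (hn : 0 < n) (L : Matrix (Fin n) (Fin n) ℝ)
    (hq : Quasipositive L) (hirr : MatIrreducible L)
    (hcol : ∀ j, ∑ i, L i j = 0)
    (α β γ ζ : Fin n → ℝ) (N m : ℝ) (hN : 0 < N) (hm : 0 < m)
    (hα : ∀ j, 0 < α j) (hαnull : L.mulVec α = 0) (hαsum : ∑ j, α j = 1)
    (hβ : ∀ j, 0 < β j) (hγ : ∀ j, 0 < γ j) (hζ : ∀ j, 0 < ζ j)
    (hprop : ∀ i, α i * β i / (ζ i + N * α i) = m * γ i) :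
    ∀ dI : ℝ, 0 < dI →
      specRad (Matrix.diagonal (fun i => N * α i * β i / (ζ i + N * α i)) *
        (Matrix.diagonal γ - dI • L)⁻¹) = m * N :=
  stmt4_general hn L hq hcol α β γ ζ N m hN hm hγ hprop
end

section
/- Consider the single-patch SIS ODE $S' = -\beta S I/(\zeta+S+I) + \gamma I$, $I' = \beta S I/(\zeta+S+I) - (\gamma+\mu) I$ with $\zeta = 0$, i.e., $S' = -\beta SI/(S+I) + \gamma I$, $I' = \beta SI/(S+I) - (\gamma+\mu)I$, with $\beta,\gamma,\mu > 0$ and initial data $S^0 \ge 0$, $I^0 > 0$. Setting $N(t) = S(t)+I(t)$ and $N^0 = S^0+I^0$, the total population satisfies the integrated identity $N(t) = N^0\left[\frac{I(t)}{I^0}e^{-(\beta-\gamma-\mu)t}\right]^{\mu/\beta}$ for all $t > 0$. -/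
open Real

lemma eq_at_zero_of_hasDerivAt_zero {h : ℝ → ℝ} (hh : ∀ t, 0 ≤ t → HasDerivAt h 0 t)
    {t : ℝ} (ht : 0 ≤ t) : h t = h 0 :=
  constant_of_has_deriv_right_zero (fun x hx => (hh x hx.1).continuousAt.continuousWithinAt)
    (fun x hx => (hh x hx.1).hasDerivWithinAt) t ⟨ht, le_rfl⟩

theorem eq_mul_rpow_of_logDeriv_eq {f g f' g' : ℝ → ℝ} {c k : ℝ}
    (hf : ∀ t, 0 ≤ t → HasDerivAt f (f' t) t) (hg : ∀ t, 0 ≤ t → HasDerivAt g (g' t) t)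
    (hf_pos : ∀ t, 0 ≤ t → 0 < f t) (hg_pos : ∀ t, 0 ≤ t → 0 < g t)
    (hlog : ∀ t, 0 ≤ t → f' t / f t = c * (g' t / g t - k)) {t : ℝ} (ht : 0 ≤ t) :
    f t = f 0 * (g t / g 0 * exp (-k * t)) ^ c := by
  have hderiv_zero : ∀ t, 0 ≤ t → HasDerivAt (fun s => log (f s) - c * (log (g s) - k * s)) 0 t := by
    intro t ht
    have hlin : HasDerivAt (fun s : ℝ => k * s) k t := by
      simpa using (hasDerivAt_id t).const_mul k
    have h := ((hf t ht).log (hf_pos t ht).ne').sub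
      ((((hg t ht).log (hg_pos t ht).ne').sub hlin).const_mul c)
    rwa [hlog t ht, sub_self] at h
  have hlog_t := eq_at_zero_of_hasDerivAt_zero hderiv_zero ht
  have hg0 := hg_pos 0 le_rfl
  have hgt := hg_pos t ht
  have hx : 0 < g t / g 0 * exp (-k * t) := by positivity
  rw [rpow_def_of_pos hx, ← exp_log (hf_pos t ht), ← exp_log (hf_pos 0 le_rfl), ← exp_add,
    log_mul (by positivity) (exp_pos _).ne', log_div hgt.ne' hg0.ne', log_exp]
  congr 1
  simp only [mul_zero, sub_zero] at hlog_t
  linarith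

lemma sis_logDeriv_total_eq {β γ μ S I : ℝ} (hβ : β ≠ 0) (hN : S + I ≠ 0) (hI : I ≠ 0) :
    ((-(β * S * I) / (S + I) + γ * I) + (β * S * I / (S + I) - (γ + μ) * I)) / (S + I) =
      μ / β * ((β * S * I / (S + I) - (γ + μ) * I) / I - (β - γ - μ)) := by
  field_simp
  ring

theorem stmt9_general (β γ μ S0 I0 : ℝ) (hβ : 0 < β)
    (S I : ℝ → ℝ) (hSinit : S 0 = S0) (hIinit : I 0 = I0)
    (hpos : ∀ t : ℝ, 0 ≤ t → 0 ≤ S t ∧ 0 < I t)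
    (hS : ∀ t : ℝ, 0 ≤ t →
      HasDerivAt S (-(β * S t * I t) / (S t + I t) + γ * I t) t)
    (hI : ∀ t : ℝ, 0 ≤ t →
      HasDerivAt I (β * S t * I t / (S t + I t) - (γ + μ) * I t) t) :
    ∀ t : ℝ, 0 < t →
      S t + I t =
        (S0 + I0) * ((I t / I0) * Real.exp (-(β - γ - μ) * t)) ^ (μ / β) := by
  intro t ht
  have hN_pos : ∀ t, 0 ≤ t → 0 < S t + I t := fun t ht => by
    linarith [hpos t ht]
  rw [← hSinit, ← hIinit]
  exact eq_mul_rpow_of_logDeriv_eq (fun t ht => (hS t ht).add (hI t ht)) hI hN_pos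
    (fun t ht => (hpos t ht).2)
    (fun t ht => sis_logDeriv_total_eq hβ.ne' (hN_pos t ht).ne' (hpos t ht).2.ne') ht.le

theorem stmt9 (β γ μ S0 I0 : ℝ) (hβ : 0 < β) (hγ : 0 < γ) (hμ : 0 < μ)
    (hS0 : 0 ≤ S0) (hI0 : 0 < I0)
    (S I : ℝ → ℝ) (hSinit : S 0 = S0) (hIinit : I 0 = I0)
    (hpos : ∀ t : ℝ, 0 ≤ t → 0 ≤ S t ∧ 0 < I t)
    (hS : ∀ t : ℝ, 0 ≤ t →
      HasDerivAt S (-(β * S t * I t) / (S t + I t) + γ * I t) t)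
    (hI : ∀ t : ℝ, 0 ≤ t →
      HasDerivAt I (β * S t * I t / (S t + I t) - (γ + μ) * I t) t) :
    ∀ t : ℝ, 0 < t →
      S t + I t =
        (S0 + I0) * ((I t / I0) * Real.exp (-(β - γ - μ) * t)) ^ (μ / β) :=
  stmt9_general β γ μ S0 I0 hβ S I hSinit hIinit hpos hS hI
end

section
/- Suppose $\bm r = \tau\bm 1$ and $\bm\zeta = m\bm\alpha$ for constants $\tau \in (0,1)$ and $m > 0$, where $\bm r = \bm\gamma/\bm\beta$. If $N > \frac{\tau m}{1-\tau}$, then $(\bm S^*, \bm I^*) = (\tau(N+m)\bm\alpha, ((1-\tau)N - \tau m)\bm\alpha)$ is an endemic equilibrium: it satisfies $\bm S^* \gg \bm 0$, $\bm I^* \gg \bm 0$, $\sum_j (S^*_j + I^*_j) = N$, and both equilibrium equations $0 = d_S\mathcal{L}\bm S^* + (\bm\gamma - \bm\beta\circ\bm S^*/(\bm\zeta + \bm S^* + \bm I^*))\circ\bm I^*$ and $0 = d_I\mathcal{L}\bm I^* + (\bm\beta\circ\bm S^*/(\bm\zeta + \bm S^* + \bm I^*) - \bm\gamma)\circ\bm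 I^*$. -/
open Matrix

theorem stmt19 {n : ℕ} (hn : 0 < n) (L : Matrix (Fin n) (Fin n) ℝ)
    (hq : Quasipositive L) (hirr : MatIrreducible L)
    (hcol : ∀ j, ∑ i, L i j = 0)
    (α β : Fin n → ℝ) (τ m N dS dI : ℝ)
    (hα : ∀ j, 0 < α j) (hαnull : L.mulVec α = 0) (hαsum : ∑ j, α j = 1)
    (hβ : ∀ j, 0 < β j) (hτ0 : 0 < τ) (hτ1 : τ < 1) (hm : 0 < m)
    (hN : τ * m / (1 - τ) < N) (hdS : 0 < dS) (hdI : 0 < dI) :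
    let S : Fin n → ℝ := fun j => τ * (N + m) * α j
    let I : Fin n → ℝ := fun j => ((1 - τ) * N - τ * m) * α j
    let ζ : Fin n → ℝ := fun j => m * α j
    let γ : Fin n → ℝ := fun j => τ * β j
    (∀ j, 0 < S j) ∧ (∀ j, 0 < I j) ∧ (∑ j, (S j + I j)) = N ∧
    (∀ i, dS * (L.mulVec S) i +
      (γ i - β i * S i / (ζ i + S i + I i)) * I i = 0) ∧
    (∀ i, dI * (L.mulVec I) i +
      (β i * S i / (ζ i + S i + I i) - γ i) * I i = 0) := by
  intro S I ζ γ
  have hτ' : 0 < 1 - τ := by linarith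
  have hIc : 0 < (1 - τ) * N - τ * m := by
    have := (div_lt_iff₀ hτ').mp hN
    nlinarith
  have hN0 : 0 < N := by nlinarith
  have hNm : 0 < N + m := by linarith
  have hS : ∀ j, 0 < S j := fun j => by
    have := hα j; simp only [S]; positivity
  have hI : ∀ j, 0 < I j := fun j => by
    have := hα j; simp only [I]; positivity
  have hreact : ∀ i, β i * S i / (ζ i + S i + I i) - γ i = 0 := by
    intro i
    have hαi := hα i
    have hden : ζ i + S i + I i = (m + N) * α i := by simp only [S, I, ζ]; ring
    rw [hden]
    have h1 : (m + N) * α i ≠ 0 := by positivity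
    field_simp [S, γ]
    ring
  have hmul : ∀ (c : ℝ), L.mulVec (fun j => c * α j) = 0 := by
    intro c
    have : (fun j => c * α j) = c • α := by funext j; simp [smul_eq_mul]
    rw [this, Matrix.mulVec_smul, hαnull]; simp
  refine ⟨hS, hI, ?_, ?_, ?_⟩
  · simp only [S, I, ← Finset.sum_add_distrib]
    have : ∀ j, τ * (N + m) * α j + ((1 - τ) * N - τ * m) * α j = N * α j := by
      intro j; ring
    simp_rw [this, ← Finset.mul_sum, hαsum, mul_one]
  · intro i
    have h1 : (L.mulVec S) i = 0 := by
      have := hmul (τ * (N + m)); simp only [S]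
      rw [this]; rfl
    have h2 := hreact i
    have : γ i - β i * S i / (ζ i + S i + I i) = 0 := by linarith
    rw [h1, this]; ring
  · intro i
    have h1 : (L.mulVec I) i = 0 := by
      have := hmul ((1 - τ) * N - τ * m); simp only [I]
      rw [this]; rfl
    rw [h1, hreact i]; ring
end
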